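/- For x, t ∈ (0,1) with x/t ≥ e^2 and x ≤ 1/2, the Bernoulli KL divergence satisfies K(x,t) ≥ (1/2)·x·log(x/t). -/

import Mathlib

open Real

lemma sub_le_mul_log_div {a b : ℝ} (ha : 0 < a) (hb : 0 < b) : a - b ≤ a * log (a / b) := by
  have h := mul_le_mul_of_nonneg_left (one_sub_inv_le_log_of_pos (div_pos ha hb)) ha.le
  rwa [inv_div, mul_one_sub, mul_div_cancel₀ _ ha.ne'] at h

theorem stmt_9_general (x t : ℝ) (hx : x ∈ Set.Ioo (0:ℝ) 1) (ht : t ∈ Set.Ioo (0:ℝ) 1)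
    (hxt : Real.exp 2 ≤ x / t) :
    x * Real.log (x / t) + (1 - x) * Real.log ((1 - x) / (1 - t))
      ≥ (1 / 2) * x * Real.log (x / t) := by
  obtain ⟨hx0, hx1⟩ := hx
  obtain ⟨ht0, ht1⟩ := ht
  have hlog : 2 ≤ log (x / t) := (le_log_iff_exp_le (div_pos hx0 ht0)).mpr hxt
  have hhalf : x * 2 ≤ x * log (x / t) := mul_le_mul_of_nonneg_left hlog hx0.le
  -- Gibbs: the second summand is at least `(1 - x) - (1 - t) = t - x > -x`.
  have hgibbs := sub_le_mul_log_div (sub_pos.mpr hx1) (sub_pos.mpr ht1)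
  linarith

/-- For `x, t ∈ (0,1)` with `x/t ≥ e^2` and `x ≤ 1/2`, the Bernoulli KL divergence
satisfies `K(x,t) ≥ (1/2) x log(x/t)`. -/
theorem stmt_9 (x t : ℝ) (hx : x ∈ Set.Ioo (0:ℝ) 1) (ht : t ∈ Set.Ioo (0:ℝ) 1)
    (hxt : Real.exp 2 ≤ x / t) (hx2 : x ≤ 1 / 2) :
    x * Real.log (x / t) + (1 - x) * Real.log ((1 - x) / (1 - t))
      ≥ (1 / 2) * x * Real.log (x / t) :=
  stmt_9_general x t hx ht hxt
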